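/- If the minimum min_j w̃_j^T x̃ is attained at a unique index, then as γ → ∞, the mixture posterior p_Θ(y|x) = Σ_{k=1}^K g_k(x,Θ) σ(y w̃_k^T x̃) converges to σ(y · min_{j∈{1,…,K}} w̃_j^T x̃), where σ(a) = 1/(1+e^{-a}). -/

import Mathlib

noncomputable def sig (a : ℝ) : ℝ := 1 / (1 + Real.exp (-a))

/-!
The gating weights are a softmin of the scores `s k = w̃_kᵀ x̃` at inverse temperature `γ`.
Subtracting the minimal score `s k₀` from every score leaves the softmin unchanged, and then
each `exp (-γ (s j - s k₀))` tends to `1` for `j = k₀` and to `0` otherwise. So the gating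
weights converge to the indicator of `k₀`, and the mixture to the `k₀`-th expert `σ (y s k₀)`.
-/

open Filter Topology Finset

noncomputable def softmin {ι : Type*} [Fintype ι] (γ : ℝ) (s : ι → ℝ) (k : ι) : ℝ :=
  Real.exp (-γ * s k) / ∑ j, Real.exp (-γ * s j)

section Softmin

variable {ι : Type*} [Fintype ι]

theorem softmin_sub_const (γ : ℝ) (s : ι → ℝ) (c : ℝ) :
    softmin γ (fun j => s j - c) = softmin γ s := by
  have hshift : ∀ j, Real.exp (-γ * (s j - c)) = Real.exp (-γ * s j) * Real.exp (γ * c) := by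
    intro j
    rw [← Real.exp_add]
    ring_nf
  ext k
  simp only [softmin, hshift, ← Finset.sum_mul]
  exact mul_div_mul_right _ _ (Real.exp_ne_zero _)

theorem tendsto_exp_neg_mul_atTop_nhds_zero {c : ℝ} (hc : 0 < c) :
    Tendsto (fun γ : ℝ => Real.exp (-γ * c)) atTop (𝓝 0) :=
  Real.tendsto_exp_comp_nhds_zero.2 (tendsto_neg_atTop_atBot.atBot_mul_const hc)

variable [DecidableEq ι]

theorem tendsto_softmin_atTop {s : ι → ℝ} {k₀ : ι} (hmin : ∀ j, j ≠ k₀ → s k₀ < s j) (k : ι) :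
    Tendsto (fun γ => softmin γ s k) atTop (𝓝 (if k = k₀ then 1 else 0)) := by
  have hterm : ∀ j, Tendsto (fun γ : ℝ => Real.exp (-γ * (s j - s k₀))) atTop
      (𝓝 (if j = k₀ then 1 else 0)) := by
    intro j
    by_cases hj : j = k₀
    · subst hj
      simp
    · simpa [hj] using tendsto_exp_neg_mul_atTop_nhds_zero (sub_pos.2 (hmin j hj))
  have hden : Tendsto (fun γ : ℝ => ∑ j, Real.exp (-γ * (s j - s k₀))) atTop (𝓝 1) := by
    simpa using tendsto_finsetSum univ fun j _ => hterm j
  have hquot := (hterm k).div hden one_ne_zero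
  rw [div_one] at hquot
  refine hquot.congr fun γ => ?_
  rw [← softmin_sub_const γ s (s k₀)]
  rfl

theorem tendsto_sum_softmin_mul_atTop {s : ι → ℝ} {k₀ : ι} (hmin : ∀ j, j ≠ k₀ → s k₀ < s j)
    (f : ι → ℝ) :
    Tendsto (fun γ => ∑ k, softmin γ s k * f k) atTop (𝓝 (f k₀)) := by
  simpa using tendsto_finsetSum univ fun k _ =>
    (tendsto_softmin_atTop hmin k).mul (tendsto_const_nhds (x := f k))

end Softmin

theorem mixture_posterior_limit_general (K d : ℕ)
    (w : Fin K → Fin (d + 1) → ℝ) (x : Fin (d + 1) → ℝ)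
    (y : ℝ)
    (g : ℝ → Fin K → ℝ)
    (hg : ∀ γ k, g γ k = Real.exp (-γ * ∑ i, w k i * x i) /
      ∑ j, Real.exp (-γ * ∑ i, w j i * x i))
    (k0 : Fin K)
    (hmin : ∀ j, j ≠ k0 → (∑ i, w k0 i * x i) < ∑ i, w j i * x i) :
    Filter.Tendsto (fun γ => ∑ k, g γ k * sig (y * ∑ i, w k i * x i))
      Filter.atTop
      (nhds (sig (y * Finset.univ.inf' ⟨k0, Finset.mem_univ k0⟩
        (fun j => ∑ i, w j i * x i)))) := by
  set s : Fin K → ℝ := fun j => ∑ i, w j i * x i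
  have hinf : univ.inf' ⟨k0, mem_univ k0⟩ s = s k0 :=
    le_antisymm (inf'_le s (mem_univ k0)) <| le_inf' _ _ fun j _ => by
      rcases eq_or_ne j k0 with rfl | hj
      exacts [le_rfl, (hmin j hj).le]
  have hsoftmin : g = fun γ => softmin γ s := funext₂ hg
  rw [hinf, hsoftmin]
  exact tendsto_sum_softmin_mul_atTop hmin fun k => sig (y * s k)

/-- if the minimum of the linear scores is attained at a unique index,
then as γ → ∞ the mixture posterior tends to σ(y · min_j w̃_j^T x̃). -/
theorem mixture_posterior_limit (K d : ℕ)
    (w : Fin K → Fin (d + 1) → ℝ) (x : Fin (d + 1) → ℝ)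
    (y : ℝ) (hy : y = 1 ∨ y = -1)
    (g : ℝ → Fin K → ℝ)
    (hg : ∀ γ k, g γ k = Real.exp (-γ * ∑ i, w k i * x i) /
      ∑ j, Real.exp (-γ * ∑ i, w j i * x i))
    (k0 : Fin K)
    (hmin : ∀ j, j ≠ k0 → (∑ i, w k0 i * x i) < ∑ i, w j i * x i) :
    Filter.Tendsto (fun γ => ∑ k, g γ k * sig (y * ∑ i, w k i * x i))
      Filter.atTop
      (nhds (sig (y * Finset.univ.inf' ⟨k0, Finset.mem_univ k0⟩
        (fun j => ∑ i, w j i * x i)))) :=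
  mixture_posterior_limit_general K d w x y g hg k0 hmin
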